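/- arXiv:1305.4324 — 2 statements merged into one kernel-verified Lean document; each statement's English description precedes it below -/
import Mathlib

section
/- For every real number b ≥ 0, ∫_0^∞ exp(−(t² − b)²/t²) dt = √π/2. In particular this integral does not depend on b. -/
/-!
Cauchy–Schlömilch substitution. For `a > 0` the map `t ↦ t - a / t` is an increasing bijection
of `(0, ∞)` onto `ℝ` with derivative `1 + a / t²`, while the involution `t ↦ a / t` of `(0, ∞)`
turns the weight `a / t²` into `1` and `t - a / t` into its negative. Hence for an even integrable
`f`, `2 ∫₀^∞ f (t - a / t) dt = ∫_ℝ f = 2 ∫₀^∞ f`. Apply this to `f x = exp (-x²)`, noting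
`(t² - b)² / t² = (t - b / t)²`.
-/

open MeasureTheory Real Set

variable {E : Type*} [NormedAddCommGroup E] [NormedSpace ℝ E]

theorem Integrable.of_one_add_smul {α : Type*} [MeasurableSpace α] {μ : Measure α}
    {w : α → ℝ} {g : α → E} (hw : Measurable w) (hw₀ : ∀ x, 0 ≤ w x)
    (h : Integrable (fun x => (1 + w x) • g x) μ) :
    Integrable g μ ∧ Integrable (fun x => w x • g x) μ := by
  have hpos (x : α) : 0 < 1 + w x := by linarith [hw₀ x]
  constructor
  · refine (h.bdd_smul 1 (hw.const_add 1).inv.aestronglyMeasurable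
      (.of_forall fun x => ?_)).congr (.of_forall fun x => inv_smul_smul₀ (hpos x).ne' (g x))
    rw [Pi.inv_apply, norm_inv, Real.norm_of_nonneg (hpos x).le]
    exact inv_le_one_of_one_le₀ (by linarith [hw₀ x])
  · refine (h.bdd_smul 1 (hw.div (hw.const_add 1)).aestronglyMeasurable
      (.of_forall fun x => ?_)).congr (.of_forall fun x => ?_)
    · rw [Pi.div_apply, Real.norm_of_nonneg (div_nonneg (hw₀ x) (hpos x).le),
        div_le_one (hpos x)]
      linarith
    · rw [Pi.smul_apply', smul_smul, Pi.div_apply, div_mul_cancel₀ _ (hpos x).ne']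

theorem hasDerivAt_const_div (a : ℝ) {t : ℝ} (ht : t ≠ 0) :
    HasDerivAt (fun t : ℝ => a / t) (-(a / t ^ 2)) t := by
  simpa [div_eq_mul_inv, neg_div] using (hasDerivAt_inv ht).const_mul a

theorem integral_Ioi_div_sq_smul_comp_div {a : ℝ} (ha : 0 < a) (f : ℝ → E) :
    ∫ t in Ioi 0, (a / t ^ 2) • f (a / t) = ∫ t in Ioi 0, f t := by
  have hanti : AntitoneOn (fun t : ℝ => a / t) (Ioi 0) := fun s hs t _ hst =>
    div_le_div_of_nonneg_left ha.le hs hst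
  have himage : (fun t : ℝ => a / t) '' Ioi 0 = Ioi 0 := by
    refine Subset.antisymm (image_subset_iff.2 fun t ht => div_pos ha ht) fun s hs => ?_
    exact ⟨a / s, div_pos ha hs, div_div_cancel₀ ha.ne'⟩
  have := integral_image_eq_integral_deriv_smul_of_antitoneOn measurableSet_Ioi
    (fun t ht => (hasDerivAt_const_div a (ne_of_gt ht)).hasDerivWithinAt) hanti f
  simpa only [himage, neg_neg] using this.symm

theorem strictMonoOn_sub_div {a : ℝ} (ha : 0 ≤ a) :
    StrictMonoOn (fun t : ℝ => t - a / t) (Ioi 0) := fun s hs t _ hst => by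
  dsimp only
  linarith [div_le_div_of_nonneg_left ha hs hst.le]

theorem image_sub_div_Ioi {a : ℝ} (ha : 0 < a) : (fun t : ℝ => t - a / t) '' Ioi 0 = univ := by
  refine eq_univ_of_forall fun y => ?_
  -- the positive root of `t ^ 2 - y * t - a`
  set r := √(y ^ 2 + 4 * a)
  have hr : r ^ 2 = y ^ 2 + 4 * a := sq_sqrt (by positivity)
  have hyr : |y| < r := by
    rw [← sqrt_sq_eq_abs]
    exact sqrt_lt_sqrt (sq_nonneg y) (by linarith)
  have hpos : 0 < (y + r) / 2 := by linarith [neg_abs_le y]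
  refine ⟨(y + r) / 2, hpos, ?_⟩
  have hne : y + r ≠ 0 := by linarith
  field_simp
  linear_combination hr

theorem hasDerivWithinAt_sub_div (a : ℝ) {t : ℝ} (ht : 0 < t) :
    HasDerivWithinAt (fun t : ℝ => t - a / t) (1 + a / t ^ 2) (Ioi 0) t := by
  simpa only [sub_neg_eq_add] using
    ((hasDerivAt_id' t).fun_sub (hasDerivAt_const_div a ht.ne')).hasDerivWithinAt

theorem integral_Ioi_smul_comp_sub_div {a : ℝ} (ha : 0 < a) (f : ℝ → E) :
    ∫ t in Ioi 0, (1 + a / t ^ 2) • f (t - a / t) = ∫ x, f x := by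
  rw [eq_comm, ← setIntegral_univ, ← image_sub_div_Ioi ha,
    integral_image_eq_integral_deriv_smul_of_monotoneOn measurableSet_Ioi
      (fun t => hasDerivWithinAt_sub_div a) (strictMonoOn_sub_div ha.le).monotoneOn]

theorem integrableOn_Ioi_smul_comp_sub_div_iff {a : ℝ} (ha : 0 < a) (f : ℝ → E) :
    IntegrableOn (fun t => (1 + a / t ^ 2) • f (t - a / t)) (Ioi 0) ↔ Integrable f := by
  rw [← integrableOn_univ, ← image_sub_div_Ioi ha,
    integrableOn_image_iff_integrableOn_deriv_smul_of_monotoneOn measurableSet_Ioi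
      (fun t => hasDerivWithinAt_sub_div a) (strictMonoOn_sub_div ha.le).monotoneOn]

theorem integral_eq_two_smul_integral_Ioi_of_even {f : ℝ → E} (hf : Integrable f)
    (heven : Function.Even f) : ∫ x, f x = (2 : ℝ) • ∫ x in Ioi 0, f x := by
  rw [← intervalIntegral.integral_Iic_add_Ioi hf.integrableOn hf.integrableOn, two_smul,
    ← neg_zero, ← integral_comp_neg_Ioi, neg_zero]
  simp only [heven _]

theorem integral_Ioi_comp_sub_div_of_even {a : ℝ} (ha : 0 ≤ a) {f : ℝ → E}
    (hf : Integrable f) (heven : Function.Even f) :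
    ∫ t in Ioi 0, f (t - a / t) = ∫ t in Ioi 0, f t := by
  rcases ha.eq_or_lt with rfl | ha
  · simp
  obtain ⟨hint, hint_smul⟩ := Integrable.of_one_add_smul (w := fun t => a / t ^ 2)
    (by fun_prop) (fun t => by positivity) ((integrableOn_Ioi_smul_comp_sub_div_iff ha f).2 hf)
  -- `t ↦ a / t` swaps `t - a / t` and its negative
  have hreflect :
      ∫ t in Ioi 0, (a / t ^ 2) • f (t - a / t) = ∫ t in Ioi 0, f (t - a / t) := by
    rw [← integral_Ioi_div_sq_smul_comp_div ha (fun u => f (u - a / u))]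
    simp only [div_div_cancel₀ ha.ne', ← neg_sub (a / _), heven _]
  refine smul_right_injective E (two_ne_zero (α := ℝ)) ?_
  calc (2 : ℝ) • ∫ t in Ioi 0, f (t - a / t)
      = (∫ t in Ioi 0, f (t - a / t)) + ∫ t in Ioi 0, (a / t ^ 2) • f (t - a / t) := by
        rw [hreflect, two_smul]
    _ = ∫ t in Ioi 0, (1 + a / t ^ 2) • f (t - a / t) := by
        rw [← integral_add hint hint_smul]
        simp only [add_smul, one_smul]
    _ = ∫ x, f x := integral_Ioi_smul_comp_sub_div ha f
    _ = (2 : ℝ) • ∫ t in Ioi 0, f t := integral_eq_two_smul_integral_Ioi_of_even hf heven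

/-- For every real `b ≥ 0`,
`∫_0^∞ exp(−(t² − b)²/t²) dt = √π/2`; in particular the integral does not depend
on `b`. -/
theorem glasser_type_integral (b : ℝ) (hb : 0 ≤ b) :
    (∫ t in Set.Ioi (0 : ℝ), Real.exp (-((t ^ 2 - b) ^ 2 / t ^ 2))) =
      Real.sqrt Real.pi / 2 := by
  have hgauss : Integrable fun x : ℝ => exp (-x ^ 2) := by
    simpa using integrable_exp_neg_mul_sq one_pos
  calc ∫ t in Ioi 0, exp (-((t ^ 2 - b) ^ 2 / t ^ 2))
      = ∫ t in Ioi 0, exp (-(t - b / t) ^ 2) :=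
        setIntegral_congr_fun measurableSet_Ioi fun t (ht : 0 < t) => by
          field_simp
    _ = ∫ t in Ioi 0, exp (-t ^ 2) :=
        integral_Ioi_comp_sub_div_of_even hb hgauss fun x => by simp only [neg_sq]
    _ = √π / 2 := by simpa using integral_gaussian_Ioi 1
end

section
/- Let a < b be reals, let σ : [a,b] → (0,∞) be continuous, and define D(x, μ) = ∫_x^μ (t − x)/σ(t)² dt for x, μ ∈ [a,b]. Then for every x in the open interval (a,b), lim_{n→∞} √(n/(2π)) · ∫_x^b exp(−n·D(x, μ))/σ(μ) dμ = 1/2. -/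
/-!
Write `D x μ = ∫_x^μ (t - x) g t dt` with `g = σ⁻²`. Comparing `g` with its extreme values on
`[x, b]` gives `D x μ ≥ κ (μ - x)²` for some `κ > 0`, and comparing it with `g x` near `x` gives
`D x μ / (μ - x)² → 1 / (2 σ(x)²)` as `μ → x⁺`. After the substitution `μ = x + s / √n` the
integral `√n ∫_x^b exp(-n D x μ) / σ μ dμ` becomes an integral over `s > 0` whose integrand is
dominated by `C exp(-κ s²)` and converges pointwise to `exp(-s² / (2 σ(x)²)) / σ(x)`, so dominated
convergence and the half-line Gaussian integral give the limit `√(2π) / 2`.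
-/

open MeasureTheory Real Filter Topology intervalIntegral Set

section QuadraticPrimitive

variable {g : ℝ → ℝ} {x b μ c : ℝ}

lemma integral_sub_mul_const (x μ c : ℝ) : ∫ t in x..μ, (t - x) * c = c * (μ - x) ^ 2 / 2 := by
  rw [intervalIntegral.integral_mul_const, intervalIntegral.integral_comp_sub_right (fun t => t)]
  simp only [integral_id, sub_self]
  ring

lemma intervalIntegrable_sub_mul (hxμ : x ≤ μ) (hg : ContinuousOn g (Icc x μ)) :
    IntervalIntegrable (fun t => (t - x) * g t) volume x μ :=
  ((continuousOn_id.sub continuousOn_const).mul hg).intervalIntegrable_of_Icc hxμ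

lemma mul_sq_div_two_le_integral_sub_mul (hxμ : x ≤ μ) (hg : ContinuousOn g (Icc x μ))
    (hc : ∀ t ∈ Icc x μ, c ≤ g t) : c * (μ - x) ^ 2 / 2 ≤ ∫ t in x..μ, (t - x) * g t := by
  rw [← integral_sub_mul_const]
  refine integral_mono_on hxμ (intervalIntegrable_sub_mul hxμ continuousOn_const)
    (intervalIntegrable_sub_mul hxμ hg) fun t ht => ?_
  exact mul_le_mul_of_nonneg_left (hc t ht) (sub_nonneg.2 ht.1)

lemma integral_sub_mul_le_mul_sq_div_two (hxμ : x ≤ μ) (hg : ContinuousOn g (Icc x μ))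
    (hc : ∀ t ∈ Icc x μ, g t ≤ c) : ∫ t in x..μ, (t - x) * g t ≤ c * (μ - x) ^ 2 / 2 := by
  rw [← integral_sub_mul_const]
  refine integral_mono_on hxμ (intervalIntegrable_sub_mul hxμ hg)
    (intervalIntegrable_sub_mul hxμ continuousOn_const) fun t ht => ?_
  exact mul_le_mul_of_nonneg_left (hc t ht) (sub_nonneg.2 ht.1)

lemma continuousOn_integral_sub_mul (hxb : x ≤ b) (hg : ContinuousOn g (Icc x b)) :
    ContinuousOn (fun μ => ∫ t in x..μ, (t - x) * g t) (Icc x b) := by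
  have := continuousOn_primitive_interval (μ := volume) (a := x) (b := b)
    (f := fun t => (t - x) * g t) (by
      rw [uIcc_of_le hxb]
      exact ((continuousOn_id.sub continuousOn_const).mul hg).integrableOn_Icc)
  rwa [uIcc_of_le hxb] at this

lemma exists_mul_sq_le_integral_sub_mul (hxb : x ≤ b) (hg : ContinuousOn g (Icc x b))
    (hpos : ∀ t ∈ Icc x b, 0 < g t) :
    ∃ κ > 0, ∀ μ ∈ Icc x b, κ * (μ - x) ^ 2 ≤ ∫ t in x..μ, (t - x) * g t := by
  obtain ⟨t₀, ht₀, hmin⟩ := isCompact_Icc.exists_isMinOn (nonempty_Icc.2 hxb) hg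
  refine ⟨g t₀ / 2, half_pos (hpos t₀ ht₀), fun μ hμ => ?_⟩
  have := mul_sq_div_two_le_integral_sub_mul hμ.1 (hg.mono (Icc_subset_Icc_right hμ.2))
    fun t ht => hmin ⟨ht.1, ht.2.trans hμ.2⟩
  linarith

lemma tendsto_integral_sub_mul_div_sq (hxb : x < b) (hg : ContinuousOn g (Icc x b)) :
    Tendsto (fun μ => (∫ t in x..μ, (t - x) * g t) / (μ - x) ^ 2) (𝓝[>] x) (𝓝 (g x / 2)) := by
  rw [Metric.tendsto_nhdsWithin_nhds]
  intro ε hε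
  obtain ⟨δ, hδ, hgδ⟩ := Metric.continuousWithinAt_iff.1 (hg x (left_mem_Icc.2 hxb.le)) ε hε
  refine ⟨min δ (b - x), lt_min hδ (sub_pos.2 hxb), fun μ hμ hdist => ?_⟩
  have hμx : 0 < μ - x := sub_pos.2 hμ
  rw [Real.dist_eq, abs_of_pos hμx, lt_min_iff] at hdist
  have hsub : Icc x μ ⊆ Icc x b := Icc_subset_Icc_right (by linarith)
  have hclose : ∀ t ∈ Icc x μ, |g t - g x| < ε := fun t ht => by
    rw [← Real.dist_eq]
    refine hgδ (hsub ht) ?_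
    rw [Real.dist_eq, abs_of_nonneg (sub_nonneg.2 ht.1)]
    linarith [ht.2]
  have hlow := mul_sq_div_two_le_integral_sub_mul hμ.le (hg.mono hsub) (c := g x - ε)
    fun t ht => by linarith [(abs_lt.1 (hclose t ht)).1]
  have hup := integral_sub_mul_le_mul_sq_div_two hμ.le (hg.mono hsub) (c := g x + ε)
    fun t ht => by linarith [(abs_lt.1 (hclose t ht)).2]
  have hsq : 0 < (μ - x) ^ 2 := by positivity
  rw [Real.dist_eq, abs_lt, lt_sub_iff_add_lt, sub_lt_iff_lt_add, lt_div_iff₀ hsq,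
    div_lt_iff₀ hsq]
  constructor <;> nlinarith

end QuadraticPrimitive

lemma mul_integral_eq_integral_indicator_comp_div {f : ℝ → ℝ} {x b c : ℝ} (hc : 0 < c)
    (hxb : x ≤ b) :
    c * ∫ μ in x..b, f μ = ∫ s, (Ioc 0 (c * (b - x))).indicator (fun s => f (x + s / c)) s := by
  have hcb : 0 ≤ c * (b - x) := mul_nonneg hc.le (sub_nonneg.2 hxb)
  rw [MeasureTheory.integral_indicator measurableSet_Ioc, ← integral_of_le hcb]
  simp_rw [add_comm x]
  rw [integral_comp_div_add f hc.ne', smul_eq_mul, zero_div, zero_add,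
    mul_div_cancel_left₀ _ hc.ne', sub_add_cancel]

lemma mapsTo_add_div_sqrt {x b : ℝ} (hxb : x ≤ b) (n : ℝ) :
    MapsTo (fun s => x + s / √n) (Icc 0 (√n * (b - x))) (Icc x b) := by
  intro s hs
  have : s / √n ≤ b - x :=
    div_le_of_le_mul₀ (sqrt_nonneg n) (sub_nonneg.2 hxb) (by linarith [hs.2])
  exact ⟨le_add_of_nonneg_right (div_nonneg hs.1 (sqrt_nonneg n)), by linarith⟩

lemma tendsto_add_div_sqrt_nhdsGT (x : ℝ) {s : ℝ} (hs : 0 < s) :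
    Tendsto (fun n : ℝ => x + s / √n) atTop (𝓝[>] x) := by
  refine tendsto_nhdsWithin_iff.2 ⟨?_, ?_⟩
  · simpa using tendsto_const_nhds.add (tendsto_const_nhds.div_atTop tendsto_sqrt_atTop)
  · filter_upwards [tendsto_sqrt_atTop.eventually_gt_atTop 0] with n hn
    exact lt_add_of_pos_right x (div_pos hs hn)

/-- The integrand of `√n * ∫ μ in x..b, exp (-n * φ μ) * w μ` after the substitution
`μ = x + s / √n`. -/
noncomputable def laplaceRescaled (φ w : ℝ → ℝ) (x b n : ℝ) : ℝ → ℝ :=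
  (Ioc 0 (√n * (b - x))).indicator fun s => exp (-n * φ (x + s / √n)) * w (x + s / √n)

section LaplaceRescaled

variable {φ w : ℝ → ℝ} {x b κ κ₀ C n : ℝ}

lemma sqrt_mul_integral_eq_integral_laplaceRescaled (hxb : x ≤ b) (hn : 0 < n) :
    √n * ∫ μ in x..b, exp (-n * φ μ) * w μ = ∫ s, laplaceRescaled φ w x b n s :=
  mul_integral_eq_integral_indicator_comp_div (f := fun μ => exp (-n * φ μ) * w μ)
    (sqrt_pos.2 hn) hxb

lemma aestronglyMeasurable_laplaceRescaled (hxb : x ≤ b) (hφ : ContinuousOn φ (Icc x b))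
    (hw : ContinuousOn w (Icc x b)) (n : ℝ) :
    AEStronglyMeasurable (laplaceRescaled φ w x b n) := by
  refine (aestronglyMeasurable_indicator_iff measurableSet_Ioc).2 <|
    ContinuousOn.aestronglyMeasurable (ContinuousOn.mono ?_ Ioc_subset_Icc_self) measurableSet_Ioc
  have hcont : ContinuousOn (fun s => x + s / √n) (Icc 0 (√n * (b - x))) := by fun_prop
  have hmaps := mapsTo_add_div_sqrt hxb n
  exact (continuous_exp.comp_continuousOn ((hφ.comp hcont hmaps).const_smul (-n))).mul
    (hw.comp hcont hmaps)

lemma norm_laplaceRescaled_le (hxb : x ≤ b) (hn : 0 < n)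
    (hφ_ge : ∀ μ ∈ Icc x b, κ * (μ - x) ^ 2 ≤ φ μ) (hC : ∀ μ ∈ Icc x b, ‖w μ‖ ≤ C) (s : ℝ) :
    ‖laplaceRescaled φ w x b n s‖ ≤ C * exp (-κ * s ^ 2) := by
  have hC₀ : 0 ≤ C := (norm_nonneg _).trans (hC x (left_mem_Icc.2 hxb))
  by_cases hs : s ∈ Ioc 0 (√n * (b - x))
  · have hμ := mapsTo_add_div_sqrt hxb n (Ioc_subset_Icc_self hs)
    rw [laplaceRescaled, indicator_of_mem hs, norm_mul, norm_of_nonneg (exp_pos _).le, mul_comm]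
    refine mul_le_mul (hC _ hμ) (exp_le_exp.2 ?_) (exp_pos _).le hC₀
    have hscale : n * (κ * (x + s / √n - x) ^ 2) = κ * s ^ 2 := by
      rw [add_sub_cancel_left, div_pow, sq_sqrt hn.le]
      field_simp
    nlinarith [mul_le_mul_of_nonneg_left (hφ_ge _ hμ) hn.le]
  · rw [laplaceRescaled, indicator_of_notMem hs, norm_zero]
    positivity

lemma tendsto_exp_neg_mul_comp_add_div_sqrt
    (hφ : Tendsto (fun μ => φ μ / (μ - x) ^ 2) (𝓝[>] x) (𝓝 κ₀))
    (hw : ContinuousWithinAt w (Ioi x) x) {s : ℝ} (hs : 0 < s) :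
    Tendsto (fun n : ℝ => exp (-n * φ (x + s / √n)) * w (x + s / √n)) atTop
      (𝓝 (exp (-κ₀ * s ^ 2) * w x)) := by
  have hμ := tendsto_add_div_sqrt_nhdsGT x hs
  have hexponent : Tendsto (fun n : ℝ => n * φ (x + s / √n)) atTop (𝓝 (κ₀ * s ^ 2)) := by
    refine ((hφ.comp hμ).mul_const (s ^ 2)).congr' ?_
    filter_upwards [eventually_gt_atTop 0] with n hn
    simp only [Function.comp, add_sub_cancel_left, div_pow, sq_sqrt hn.le]
    field_simp
  exact ((continuous_exp.tendsto _).comp (by simpa using hexponent.neg)).mul (hw.tendsto.comp hμ)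

lemma tendsto_laplaceRescaled (hxb : x < b) (hw : ContinuousOn w (Icc x b))
    (hφ : Tendsto (fun μ => φ μ / (μ - x) ^ 2) (𝓝[>] x) (𝓝 κ₀)) (s : ℝ) :
    Tendsto (fun n => laplaceRescaled φ w x b n s) atTop
      (𝓝 ((Ioi 0).indicator (fun s => exp (-κ₀ * s ^ 2) * w x) s)) := by
  rcases le_or_gt s 0 with hs | hs
  · simp [laplaceRescaled, hs]
  rw [indicator_of_mem (show s ∈ Ioi 0 from hs)]
  have hwx : ContinuousWithinAt w (Ioi x) x :=
    (hw x (left_mem_Icc.2 hxb.le)).mono_of_mem_nhdsWithin (Icc_mem_nhdsGT hxb)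
  refine (tendsto_exp_neg_mul_comp_add_div_sqrt hφ hwx hs).congr' ?_
  filter_upwards [(tendsto_sqrt_atTop.atTop_mul_const (sub_pos.2 hxb)).eventually_ge_atTop s]
    with n hn
  rw [laplaceRescaled, indicator_of_mem (show s ∈ Ioc 0 (√n * (b - x)) from ⟨hs, hn⟩)]

end LaplaceRescaled

theorem tendsto_sqrt_mul_integral_exp_neg_mul {φ w : ℝ → ℝ} {x b κ κ₀ : ℝ} (hxb : x < b)
    (hφ : ContinuousOn φ (Icc x b)) (hw : ContinuousOn w (Icc x b))
    (hκ : 0 < κ) (hφ_ge : ∀ μ ∈ Icc x b, κ * (μ - x) ^ 2 ≤ φ μ)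
    (hφ_asymp : Tendsto (fun μ => φ μ / (μ - x) ^ 2) (𝓝[>] x) (𝓝 κ₀)) :
    Tendsto (fun n : ℝ => √n * ∫ μ in x..b, exp (-n * φ μ) * w μ) atTop
      (𝓝 (√(π / κ₀) / 2 * w x)) := by
  obtain ⟨C, hC⟩ := isCompact_Icc.exists_bound_of_continuousOn hw
  have hlim : Tendsto (fun n => ∫ s, laplaceRescaled φ w x b n s) atTop
      (𝓝 (∫ s, (Ioi 0).indicator (fun s => exp (-κ₀ * s ^ 2) * w x) s)) :=
    tendsto_integral_filter_of_dominated_convergence (fun s => C * exp (-κ * s ^ 2))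
      (.of_forall (aestronglyMeasurable_laplaceRescaled hxb.le hφ hw))
      (by filter_upwards [eventually_gt_atTop 0] with n hn using
        .of_forall (norm_laplaceRescaled_le hxb.le hn hφ_ge hC))
      ((integrable_exp_neg_mul_sq hκ).const_mul C)
      (.of_forall (tendsto_laplaceRescaled hxb hw hφ_asymp))
  rw [MeasureTheory.integral_indicator measurableSet_Ioi, MeasureTheory.integral_mul_const,
    integral_gaussian_Ioi] at hlim
  refine hlim.congr' ?_
  filter_upwards [eventually_gt_atTop 0] with n hn
  exact (sqrt_mul_integral_eq_integral_laplaceRescaled hxb.le hn).symm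

theorem laplace_onesided_limit_general (a b : ℝ)
    (σ : ℝ → ℝ) (hσcont : ContinuousOn σ (Set.Icc a b))
    (hσpos : ∀ t ∈ Set.Icc a b, 0 < σ t)
    (D : ℝ → ℝ → ℝ) (hD : ∀ x μ, D x μ = ∫ t in x..μ, (t - x) / (σ t) ^ 2) :
    ∀ x ∈ Set.Ioo a b,
      Tendsto
        (fun n : ℕ =>
          Real.sqrt (n / (2 * Real.pi)) *
            ∫ μ in x..b, Real.exp (-(n : ℝ) * D x μ) / σ μ)
        atTop (𝓝 (1 / 2)) := by
  rintro x ⟨hax, hxb⟩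
  have hsub : Icc x b ⊆ Icc a b := Icc_subset_Icc_left hax.le
  have hσ : ContinuousOn σ (Icc x b) := hσcont.mono hsub
  have hσ_ne : ∀ t ∈ Icc x b, σ t ≠ 0 := fun t ht => (hσpos t (hsub ht)).ne'
  set g : ℝ → ℝ := fun t => (σ t ^ 2)⁻¹
  have hg : ContinuousOn g (Icc x b) := (hσ.pow 2).inv₀ fun t ht => pow_ne_zero 2 (hσ_ne t ht)
  have hDx : D x = fun μ => ∫ t in x..μ, (t - x) * g t := funext fun μ => by
    simp only [hD, g, div_eq_mul_inv]
  obtain ⟨κ, hκ, hκD⟩ := exists_mul_sq_le_integral_sub_mul hxb.le hg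
    fun t ht => inv_pos.2 (pow_pos (hσpos t (hsub ht)) 2)
  have hlim := tendsto_sqrt_mul_integral_exp_neg_mul hxb (continuousOn_integral_sub_mul hxb.le hg)
    (hσ.inv₀ hσ_ne) hκ hκD (tendsto_integral_sub_mul_div_sq hxb hg)
  have hσx : 0 < σ x := hσpos x ⟨hax.le, hxb.le⟩
  have hval : √(π / (g x / 2)) / 2 * (σ x)⁻¹ * (√(2 * π))⁻¹ = 1 / 2 := by
    rw [show π / (g x / 2) = (√(2 * π) * σ x) ^ 2 by
      rw [mul_pow, sq_sqrt (by positivity)]; field_simp; simp [g]]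
    rw [sqrt_sq (by positivity)]
    field_simp
  rw [← hval]
  refine ((hlim.comp tendsto_natCast_atTop_atTop).mul_const (√(2 * π))⁻¹).congr fun n => ?_
  have h2π : (0 : ℝ) ≤ (2 * π)⁻¹ := by positivity
  simp only [Function.comp, hDx, Pi.inv_apply, div_eq_mul_inv, sqrt_mul' _ h2π, sqrt_inv]
  exact mul_right_comm _ _ _

/-- One-sided Laplace approximation at an interior point: for continuous
`σ : [a,b] → (0,∞)` and `D(x, μ) = ∫_x^μ (t − x)/σ(t)² dt`, for every `x ∈ (a,b)`,
`√(n/(2π)) · ∫_x^b exp(−n·D(x, μ))/σ(μ) dμ → 1/2` as `n → ∞`. -/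
theorem laplace_onesided_limit (a b : ℝ) (hab : a < b)
    (σ : ℝ → ℝ) (hσcont : ContinuousOn σ (Set.Icc a b))
    (hσpos : ∀ t ∈ Set.Icc a b, 0 < σ t)
    (D : ℝ → ℝ → ℝ) (hD : ∀ x μ, D x μ = ∫ t in x..μ, (t - x) / (σ t) ^ 2) :
    ∀ x ∈ Set.Ioo a b,
      Tendsto
        (fun n : ℕ =>
          Real.sqrt (n / (2 * Real.pi)) *
            ∫ μ in x..b, Real.exp (-(n : ℝ) * D x μ) / σ μ)
        atTop (𝓝 (1 / 2)) :=
  laplace_onesided_limit_general a b σ hσcont hσpos D hD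
end
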